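/- arXiv:1312.0365 — 2 statements merged into one kernel-verified Lean document; each statement's English description precedes it below -/
import Mathlib

section
/- Let X > 0 be a random variable with P[X = 1] < 1 and E[X⁻¹] = 1. Then for every p ∈ (0,1) one has the strict inequality E[1/(p + (1−p)·X)] < 1. -/
/-! By strict convexity of `t ↦ t⁻¹` on `(0, ∞)`, applied to the points `1` and `X`,
`(p + (1 - p) X)⁻¹ ≤ p + (1 - p) X⁻¹`, strictly wherever `X ≠ 1`. The right-hand side has
expectation `p + (1 - p) E[X⁻¹] = 1`, and `X ≠ 1` on a set of positive probability. -/

open MeasureTheory Set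

section HarmonicMean

variable {p x : ℝ}

lemma inv_add_mul_lt (hp : p ∈ Ioo (0 : ℝ) 1) (hx : 0 < x) (hx1 : x ≠ 1) :
    (p + (1 - p) * x)⁻¹ < p + (1 - p) * x⁻¹ := by
  have h := (strictConvexOn_zpow (m := -1) (by norm_num) (by norm_num)).2
    (mem_Ioi.2 one_pos) (mem_Ioi.2 hx) hx1.symm hp.1 (sub_pos.2 hp.2) (add_sub_cancel p 1)
  simpa only [smul_eq_mul, zpow_neg_one, mul_one, inv_one] using h

lemma inv_add_mul_le (hp : p ∈ Ioo (0 : ℝ) 1) (hx : 0 < x) :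
    (p + (1 - p) * x)⁻¹ ≤ p + (1 - p) * x⁻¹ := by
  rcases eq_or_ne x 1 with rfl | hx1
  · simp
  · exact (inv_add_mul_lt hp hx hx1).le

end HarmonicMean

section Integral

variable {α : Type*} {m : MeasurableSpace α} {μ : Measure α} {f g : α → ℝ}

lemma integrable_and_integral_eq_of_lintegral_ofReal_eq {r : ENNReal} (hr : r ≠ ⊤)
    (hf_nonneg : 0 ≤ᵐ[μ] f) (hf_meas : AEStronglyMeasurable f μ)
    (hf : ∫⁻ a, ENNReal.ofReal (f a) ∂μ = r) :
    Integrable f μ ∧ ∫ a, f a ∂μ = r.toReal := by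
  refine ⟨⟨hf_meas, ?_⟩, ?_⟩
  · rwa [hasFiniteIntegral_iff_ofReal hf_nonneg, hf, lt_top_iff_ne_top]
  · rw [integral_eq_lintegral_of_nonneg_ae hf_nonneg hf_meas, hf]

lemma integral_lt_integral_of_ae_le_of_measure_setOf_lt_ne_zero (hf : Integrable f μ)
    (hg : Integrable g μ) (hfg : f ≤ᵐ[μ] g) (hlt : μ {a | f a < g a} ≠ 0) :
    ∫ a, f a ∂μ < ∫ a, g a ∂μ := by
  have hsub_nonneg : 0 ≤ᵐ[μ] g - f := hfg.mono fun a ha => sub_nonneg.2 ha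
  have hsub_pos : 0 < ∫ a, (g - f) a ∂μ := by
    rw [integral_pos_iff_support_of_nonneg_ae hsub_nonneg (hg.sub hf)]
    refine (pos_iff_ne_zero.2 hlt).trans_le (measure_mono fun a ha => ?_)
    exact (sub_pos.2 ha).ne'
  rw [Pi.sub_def, integral_sub hg hf] at hsub_pos
  linarith

lemma prob_compl_ne_zero_of_lt_one [IsProbabilityMeasure μ] {s : Set α} (hs : MeasurableSet s)
    (h : μ s < 1) : μ sᶜ ≠ 0 := by
  rw [prob_compl_eq_one_sub hs]
  exact (tsub_pos_of_lt h).ne'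

end Integral

/-- Let `X > 0` a.s. with `P[X = 1] < 1` and `E[X⁻¹] = 1`. Then for
every `p ∈ (0,1)` one has the strict inequality `E[1/(p + (1−p)·X)] < 1`. -/
theorem strict_inequality_below_one
    {Ω : Type*} {𝒜 : MeasurableSpace Ω}
    (P : @Measure Ω 𝒜) [IsProbabilityMeasure P]
    (X : Ω → ℝ) (hX_meas : Measurable X) (hX_pos : ∀ᵐ ω ∂P, 0 < X ω)
    (hX_ne_one : P {ω | X ω = 1} < 1)
    (hXinv : ∫⁻ ω, ENNReal.ofReal (X ω)⁻¹ ∂P = 1) :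
    ∀ p ∈ Set.Ioo (0:ℝ) 1, ∫ ω, 1 / (p + (1 - p) * X ω) ∂P < 1 := by
  intro p hp
  obtain ⟨hXinv_int, hXinv_val⟩ := integrable_and_integral_eq_of_lintegral_ofReal_eq
    ENNReal.one_ne_top (hX_pos.mono fun ω hω => inv_nonneg.2 hω.le)
    hX_meas.inv.aestronglyMeasurable hXinv
  have hg_int : Integrable (fun ω => p + (1 - p) * (X ω)⁻¹) P :=
    (integrable_const p).add (hXinv_int.const_mul (1 - p))
  have hle : ∀ᵐ ω ∂P, 1 / (p + (1 - p) * X ω) ≤ p + (1 - p) * (X ω)⁻¹ :=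
    hX_pos.mono fun ω hω => by simpa only [one_div] using inv_add_mul_le hp hω
  have hf_int : Integrable (fun ω => 1 / (p + (1 - p) * X ω)) P := by
    refine hg_int.mono' (measurable_const.div (measurable_const.add
      (hX_meas.const_mul _))).aestronglyMeasurable ?_
    filter_upwards [hX_pos, hle] with ω hω hω_le
    have hden : 0 < p + (1 - p) * X ω := by nlinarith [hp.1, hp.2]
    rwa [Real.norm_of_nonneg (one_div_pos.2 hden).le]
  have hX_ne_one_pos : P {ω | X ω = 1}ᶜ ≠ 0 :=
    prob_compl_ne_zero_of_lt_one (hX_meas (measurableSet_singleton 1)) hX_ne_one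
  have hlt : P {ω | 1 / (p + (1 - p) * X ω) < p + (1 - p) * (X ω)⁻¹} ≠ 0 := by
    refine fun h => hX_ne_one_pos (measure_mono_null_ae ?_ h)
    filter_upwards [hX_pos] with ω hω hω_ne
    show 1 / _ < _
    simpa only [one_div] using inv_add_mul_lt hp hω hω_ne
  calc ∫ ω, 1 / (p + (1 - p) * X ω) ∂P
      < ∫ ω, p + (1 - p) * (X ω)⁻¹ ∂P :=
        integral_lt_integral_of_ae_le_of_measure_setOf_lt_ne_zero hf_int hg_int hle hlt
    _ = 1 := by
      rw [integral_add (integrable_const p) (hXinv_int.const_mul (1 - p)), integral_const_mul,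
        hXinv_val]
      simp
end

section
/- Suppose λ₀ is non-constant under P₁ (i.e. P₁[λ₀ = c′] < 1 for every constant c′) and fix p₁ ∈ (0,1). Then there exists a unique c > 0 solving 1 = E₁[1/(p₁ + (1−p₁)·c·λ₀)], and this solution satisfies 1/E₁[λ₀] < c < E₁[1/λ₀]. -/
/-!
Write `L = fAc / fA` and `q = 1 - p₁`. The densities are positive `μ`-a.e. and `P₁ ≪ μ`, so
`L > 0` `P₁`-a.e. Hence `c ↦ E₁[1 / (p₁ + q c L)]` is continuous and strictly decreasing on
`[0, ∞)` (dominated by `1 / p₁`), equal to `1 / p₁ > 1` at `0` and tending to `0` at `∞`: it takes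
the value `1` exactly once, at some `c > 0`.

Both bounds are strict Jensen for `x ↦ x⁻¹`, which applies because `L` is not a.s. constant.
Applied to `Z = p₁ + q c L` with `E₁[Z⁻¹] = 1` it gives `E₁[Z] > 1`, i.e. `c E₁[L] > 1`.
Applied to `Z = p₁ / L + q c`, whose inverse is `(1 - p₁ / (p₁ + q c L)) / (q c)`, so that
`E₁[Z⁻¹] = 1 / c`, it gives `E₁[Z] > c`, i.e. `E₁[1 / L] > c`.
-/

open MeasureTheory Set Filter Topology Function

section Integral

variable {Ω : Type*} {m : MeasurableSpace Ω} {P : Measure Ω}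

lemma integral_lt_integral_of_ae_lt [NeZero P] {f g : Ω → ℝ} (hf : Integrable f P)
    (hg : Integrable g P) (hfg : ∀ᵐ ω ∂P, f ω < g ω) : ∫ ω, f ω ∂P < ∫ ω, g ω ∂P := by
  rw [← sub_pos, ← integral_sub hg hf, integral_pos_iff_support_of_nonneg_ae
    (hfg.mono fun ω h ↦ (sub_pos.mpr h).le) (hg.sub hf), pos_iff_ne_zero]
  intro h
  have hfalse : ∀ᵐ ω ∂P, False := by
    filter_upwards [measure_eq_zero_iff_ae_notMem.mp h, hfg] with ω hω hlt
    exact hω (sub_ne_zero.mpr hlt.ne')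
  exact NeZero.ne P (ae_eq_bot.mp (eventually_false_iff_eq_bot.mp hfalse))

lemma not_ae_eq_const_of_measure_lt_one [IsProbabilityMeasure P] {α : Type*} {f : Ω → α}
    {a : α} (h : P {ω | f ω = a} < 1) : ¬ f =ᵐ[P] const Ω a := by
  intro hf
  have hfull : {ω | f ω = a} =ᵐ[P] (univ : Set Ω) := ae_eq_univ.mpr (ae_iff.mp hf)
  exact h.ne (by rw [measure_congr hfull, measure_univ])

lemma not_ae_eq_const_comp [NeZero P] {α β : Type*} {f : Ω → α} {g : α → β}
    (hg : Injective g) (hf : ∀ a, ¬ f =ᵐ[P] const Ω a) (b : β) :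
    ¬ (g ∘ f) =ᵐ[P] const Ω b := by
  intro hgf
  obtain ⟨ω₀, hω₀⟩ := hgf.exists
  refine hf (f ω₀) ?_
  filter_upwards [hgf] with ω hω
  exact hg (hω.trans hω₀.symm)

lemma inv_integral_lt_integral_inv [IsProbabilityMeasure P] {Z : Ω → ℝ} {a : ℝ} (ha : 0 < a)
    (hZ : ∀ᵐ ω ∂P, a ≤ Z ω) (hZi : Integrable Z P) (hZc : ∀ b, ¬ Z =ᵐ[P] const Ω b) :
    (∫ ω, Z ω ∂P)⁻¹ < ∫ ω, (Z ω)⁻¹ ∂P := by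
  have hconv : StrictConvexOn ℝ (Ici a) (·⁻¹ : ℝ → ℝ) := by
    simpa only [zpow_neg_one] using
      (strictConvexOn_zpow (m := -1) (by norm_num) (by norm_num)).subset
        (Ici_subset_Ioi.mpr ha) (convex_Ici a)
  have hZi' : Integrable (fun ω ↦ (Z ω)⁻¹) P := by
    refine (integrable_const a⁻¹).mono' hZi.aemeasurable.inv.aestronglyMeasurable ?_
    filter_upwards [hZ] with ω hω
    rw [norm_inv, Real.norm_of_nonneg (ha.le.trans hω)]
    exact inv_anti₀ ha hω
  rcases hconv.ae_eq_const_or_map_average_lt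
    (continuousOn_inv₀.mono fun x hx ↦ (ha.trans_le hx).ne') isClosed_Ici hZ hZi hZi'
    with hconst | hlt
  · exact absurd hconst (hZc _)
  · simpa only [average_eq_integral] using hlt

lemma ofReal_lt_lintegral_ofReal {f : Ω → ℝ} {a : ℝ} (hfm : AEStronglyMeasurable f P)
    (hf : 0 ≤ᵐ[P] f) (ha : 0 < a) (h : Integrable f P → a < ∫ ω, f ω ∂P) :
    ENNReal.ofReal a < ∫⁻ ω, ENNReal.ofReal (f ω) ∂P := by
  by_cases hfi : Integrable f P
  · rw [← ofReal_integral_eq_lintegral_ofReal hfi hf]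
    exact (ENNReal.ofReal_lt_ofReal_iff (ha.trans (h hfi))).mpr (h hfi)
  · rw [not_not.mp (mt (lintegral_ofReal_ne_top_iff_integrable hfm hf).mp hfi)]
    exact ENNReal.ofReal_lt_top

end Integral

lemma trim_absolutelyContinuous_of_setIntegral_eq {Ω : Type*} {𝒜 ℋ : MeasurableSpace Ω}
    (hℋ : ℋ ≤ 𝒜) {P₀ : @Measure Ω 𝒜} [IsFiniteMeasure P₀] {A : Set Ω}
    (hA : MeasurableSet[𝒜] A) {μ : @Measure Ω ℋ} {a b : ℝ} {f g : Ω → ℝ}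
    (hf : ∀ H : Set Ω, MeasurableSet[ℋ] H → (P₀ (H ∩ A)).toReal = a * ∫ ω in H, f ω ∂μ)
    (hg : ∀ H : Set Ω, MeasurableSet[ℋ] H → (P₀ (H ∩ Aᶜ)).toReal = b * ∫ ω in H, g ω ∂μ) :
    P₀.trim hℋ ≪ μ := by
  refine Measure.AbsolutelyContinuous.mk fun N hN hμN ↦ ?_
  have hnull : ∀ B, (P₀ (N ∩ B)).toReal = 0 → P₀ (N ∩ B) = 0 := fun B h ↦
    ((ENNReal.toReal_eq_zero_iff _).mp h).resolve_right (measure_ne_top P₀ _)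
  have hzero : μ.restrict N = 0 := Measure.restrict_eq_zero.mpr hμN
  rw [trim_measurableSet_eq hℋ hN, ← measure_inter_add_sdiff N hA, sdiff_eq,
    hnull A (by rw [hf N hN, hzero, integral_zero_measure, mul_zero]),
    hnull Aᶜ (by rw [hg N hN, hzero, integral_zero_measure, mul_zero]), add_zero]

lemma le_add_one_sub_mul {p c x : ℝ} (hp : p ≤ 1) (hc : 0 ≤ c) (hx : 0 ≤ x) :
    p ≤ p + (1 - p) * (c * x) :=
  le_add_of_nonneg_right (mul_nonneg (sub_nonneg.mpr hp) (mul_nonneg hc hx))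

section InvMixtureMean

variable {Ω : Type*} {m : MeasurableSpace Ω} {P : Measure Ω} {L : Ω → ℝ} {p : ℝ}

noncomputable def invMixtureMean (P : Measure Ω) (L : Ω → ℝ) (p c : ℝ) : ℝ :=
  ∫ ω, 1 / (p + (1 - p) * (c * L ω)) ∂P

lemma norm_one_div_mixture_le (hL : ∀ᵐ ω ∂P, 0 ≤ L ω) (hp0 : 0 < p) (hp1 : p ≤ 1)
    {c : ℝ} (hc : 0 ≤ c) : ∀ᵐ ω ∂P, ‖1 / (p + (1 - p) * (c * L ω))‖ ≤ 1 / p := by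
  filter_upwards [hL] with ω hω
  have hle := le_add_one_sub_mul hp1 hc hω
  rw [Real.norm_of_nonneg (one_div_nonneg.mpr (hp0.le.trans hle))]
  exact one_div_le_one_div_of_le hp0 hle

lemma integrable_one_div_mixture [IsFiniteMeasure P] (hLm : AEMeasurable L P)
    (hL : ∀ᵐ ω ∂P, 0 ≤ L ω) (hp0 : 0 < p) (hp1 : p ≤ 1) {c : ℝ} (hc : 0 ≤ c) :
    Integrable (fun ω ↦ 1 / (p + (1 - p) * (c * L ω))) P :=
  (integrable_const (1 / p)).mono' (by fun_prop : AEMeasurable _ P).aestronglyMeasurable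
    (norm_one_div_mixture_le hL hp0 hp1 hc)

lemma invMixtureMean_zero [IsProbabilityMeasure P] : invMixtureMean P L p 0 = 1 / p := by
  simp [invMixtureMean]

lemma invMixtureMean_strictAntiOn [IsProbabilityMeasure P] (hLm : AEMeasurable L P)
    (hL : ∀ᵐ ω ∂P, 0 < L ω) (hp0 : 0 < p) (hp1 : p < 1) :
    StrictAntiOn (invMixtureMean P L p) (Ici 0) := by
  intro c (hc : 0 ≤ c) c' (hc' : 0 ≤ c') hcc'
  have hL0 : ∀ᵐ ω ∂P, 0 ≤ L ω := hL.mono fun _ ↦ le_of_lt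
  refine integral_lt_integral_of_ae_lt (integrable_one_div_mixture hLm hL0 hp0 hp1.le hc')
    (integrable_one_div_mixture hLm hL0 hp0 hp1.le hc) ?_
  filter_upwards [hL] with ω hω
  have hpos := hp0.trans_le (le_add_one_sub_mul hp1.le hc hω.le)
  refine one_div_lt_one_div_of_lt hpos ?_
  gcongr

lemma invMixtureMean_continuousOn [IsFiniteMeasure P] (hLm : AEMeasurable L P)
    (hL : ∀ᵐ ω ∂P, 0 ≤ L ω) (hp0 : 0 < p) (hp1 : p ≤ 1) :
    ContinuousOn (invMixtureMean P L p) (Ici 0) := by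
  refine continuousOn_of_dominated (bound := fun _ ↦ 1 / p)
    (fun c _ ↦ (by fun_prop : AEMeasurable _ P).aestronglyMeasurable)
    (fun c hc ↦ norm_one_div_mixture_le hL hp0 hp1 hc) (integrable_const _) ?_
  filter_upwards [hL] with ω hω
  refine ContinuousOn.div continuousOn_const (by fun_prop) fun c (hc : 0 ≤ c) ↦ ?_
  exact (hp0.trans_le (le_add_one_sub_mul hp1 hc hω)).ne'

lemma tendsto_invMixtureMean_atTop [IsFiniteMeasure P] (hLm : AEMeasurable L P)
    (hL : ∀ᵐ ω ∂P, 0 < L ω) (hp0 : 0 < p) (hp1 : p < 1) :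
    Tendsto (invMixtureMean P L p) atTop (𝓝 0) := by
  have hL0 : ∀ᵐ ω ∂P, 0 ≤ L ω := hL.mono fun _ ↦ le_of_lt
  have hlim : ∀ᵐ ω ∂P, Tendsto (fun c ↦ 1 / (p + (1 - p) * (c * L ω))) atTop (𝓝 0) := by
    filter_upwards [hL] with ω hω
    have hden : Tendsto (fun c ↦ p + (1 - p) * (c * L ω)) atTop atTop :=
      tendsto_atTop_add_const_left _ _
        ((tendsto_id.atTop_mul_const hω).const_mul_atTop (sub_pos.mpr hp1))
    simpa only [one_div, Function.comp_def] using tendsto_inv_atTop_zero.comp hden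
  have h := tendsto_integral_filter_of_dominated_convergence (fun _ ↦ 1 / p)
    (Eventually.of_forall fun c ↦ (by fun_prop : AEMeasurable _ P).aestronglyMeasurable)
    ((eventually_ge_atTop 0).mono fun c hc ↦ norm_one_div_mixture_le hL0 hp0 hp1.le hc)
    (integrable_const _) hlim
  rwa [integral_zero] at h

lemma existsUnique_invMixtureMean_eq_one [IsProbabilityMeasure P] (hLm : AEMeasurable L P)
    (hL : ∀ᵐ ω ∂P, 0 < L ω) (hp0 : 0 < p) (hp1 : p < 1) :
    ∃! c : ℝ, 0 < c ∧ 1 = invMixtureMean P L p c := by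
  have hanti := invMixtureMean_strictAntiOn hLm hL hp0 hp1
  obtain ⟨C, hC, hC0⟩ :=
    ((tendsto_invMixtureMean_atTop hLm hL hp0 hp1).eventually (eventually_lt_nhds one_pos)
      |>.and (eventually_ge_atTop 0)).exists
  have h0 : 1 < invMixtureMean P L p 0 := by
    rw [invMixtureMean_zero]; exact one_lt_one_div hp0 hp1
  obtain ⟨c, ⟨hc0, -⟩, hc⟩ := intermediate_value_Icc' hC0
    ((invMixtureMean_continuousOn hLm (hL.mono fun _ ↦ le_of_lt) hp0 hp1.le).mono
      Icc_subset_Ici_self) ⟨hC.le, h0.le⟩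
  refine ⟨c, ⟨hc0.lt_of_ne ?_, hc.symm⟩, fun c' hc' ↦ ?_⟩
  · rintro rfl; exact h0.ne' hc
  · exact hanti.injOn (mem_Ici.mpr hc'.1.le) (mem_Ici.mpr hc0) (hc'.2.symm.trans hc.symm)

lemma inv_lt_integral_of_invMixtureMean_eq_one [IsProbabilityMeasure P]
    (hL : ∀ᵐ ω ∂P, 0 < L ω) (hLi : Integrable L P) (hLc : ∀ a, ¬ L =ᵐ[P] const Ω a)
    (hp0 : 0 < p) (hp1 : p < 1) {c : ℝ} (hc : 0 < c) (h1 : invMixtureMean P L p c = 1) :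
    c⁻¹ < ∫ ω, L ω ∂P := by
  have hq : 0 < 1 - p := sub_pos.mpr hp1
  have hjensen := inv_integral_lt_integral_inv (Z := fun ω ↦ p + (1 - p) * (c * L ω)) hp0
    (hL.mono fun ω hω ↦ le_add_of_nonneg_right (by positivity))
    ((integrable_const p).add ((hLi.const_mul c).const_mul (1 - p)))
    (not_ae_eq_const_comp (g := fun x ↦ p + (1 - p) * (c * x))
      (fun x y hxy ↦ by simpa [hq.ne', hc.ne'] using hxy) hLc)
  simp only [invMixtureMean, one_div] at h1
  rw [h1, integral_add (integrable_const p) ((hLi.const_mul c).const_mul (1 - p)),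
    integral_const_mul, integral_const_mul, integral_const, probReal_univ, one_smul] at hjensen
  have hm : 0 ≤ ∫ ω, L ω ∂P := integral_nonneg_of_ae (hL.mono fun _ ↦ le_of_lt)
  have hden : 1 < p + (1 - p) * (c * ∫ ω, L ω ∂P) :=
    (inv_lt_one_iff₀.mp hjensen).resolve_left (not_le.mpr (by positivity))
  rw [inv_lt_iff_one_lt_mul₀' hc]
  nlinarith

lemma lt_integral_inv_of_invMixtureMean_eq_one [IsProbabilityMeasure P] (hLm : AEMeasurable L P)
    (hL : ∀ᵐ ω ∂P, 0 < L ω) (hLi : Integrable (fun ω ↦ (L ω)⁻¹) P)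
    (hLc : ∀ a, ¬ L =ᵐ[P] const Ω a) (hp0 : 0 < p) (hp1 : p < 1) {c : ℝ} (hc : 0 < c)
    (h1 : invMixtureMean P L p c = 1) :
    c < ∫ ω, (L ω)⁻¹ ∂P := by
  have hq : 0 < 1 - p := sub_pos.mpr hp1
  have hjensen := inv_integral_lt_integral_inv (Z := fun ω ↦ p * (L ω)⁻¹ + (1 - p) * c)
    (by positivity) (hL.mono fun ω hω ↦ le_add_of_nonneg_left (by positivity))
    ((hLi.const_mul p).add (integrable_const _))
    (not_ae_eq_const_comp (g := fun x ↦ p * x⁻¹ + (1 - p) * c)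
      (fun x y hxy ↦ by simpa [hp0.ne'] using hxy) hLc)
  have hrecip : ∀ᵐ ω ∂P, (p * (L ω)⁻¹ + (1 - p) * c)⁻¹
      = (1 - p * (1 / (p + (1 - p) * (c * L ω)))) / ((1 - p) * c) := by
    filter_upwards [hL] with ω hω
    have : 0 < p + (1 - p) * (c * L ω) := by positivity
    field_simp
    ring
  have hF := integrable_one_div_mixture hLm (hL.mono fun _ ↦ le_of_lt) hp0 hp1.le hc.le
  rw [integral_congr_ae hrecip, integral_div, integral_sub (integrable_const 1) (hF.const_mul p),
    integral_const_mul, integral_add (hLi.const_mul p) (integrable_const _), integral_const_mul]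
    at hjensen
  rw [show ∫ ω, 1 / (p + (1 - p) * (c * L ω)) ∂P = 1 from h1] at hjensen
  simp only [integral_const, probReal_univ, one_smul, mul_one] at hjensen
  have hm : 0 ≤ ∫ ω, (L ω)⁻¹ ∂P := integral_nonneg_of_ae (hL.mono fun _ h ↦ (inv_pos.mpr h).le)
  rw [div_mul_cancel_left₀ hq.ne', inv_lt_inv₀ (by positivity) hc] at hjensen
  nlinarith

end InvMixtureMean

theorem scaled_likelihood_ratio_general
    {Ω : Type*} {𝒜 ℋ : MeasurableSpace Ω} (hℋ : ℋ ≤ 𝒜)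
    (P₀ : @Measure Ω 𝒜) [IsProbabilityMeasure P₀]
    (P₁ : @Measure Ω ℋ) [IsProbabilityMeasure P₁] (habs : P₁ ≪ P₀.trim hℋ)
    (A : Set Ω) (hA : MeasurableSet[𝒜] A)
    (p₀ : ℝ)
    (μ : @Measure Ω ℋ)
    (fA fAc : Ω → ℝ)
    (hfA_meas : @Measurable Ω ℝ ℋ _ fA) (hfAc_meas : @Measurable Ω ℝ ℋ _ fAc)
    (hfA_pos : ∀ᵐ ω ∂μ, 0 < fA ω) (hfAc_pos : ∀ᵐ ω ∂μ, 0 < fAc ω)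
    (hdensA : ∀ H : Set Ω, MeasurableSet[ℋ] H →
      (P₀ (H ∩ A)).toReal = p₀ * ∫ ω in H, fA ω ∂μ)
    (hdensAc : ∀ H : Set Ω, MeasurableSet[ℋ] H →
      (P₀ (H ∩ Aᶜ)).toReal = (1 - p₀) * ∫ ω in H, fAc ω ∂μ)
    (hnonconst : ∀ c' : ℝ, P₁ {ω | fAc ω / fA ω = c'} < 1)
    (p₁ : ℝ) (hp₁ : p₁ ∈ Set.Ioo (0:ℝ) 1) :
    (∃! c : ℝ, 0 < c ∧
      (1:ℝ) = ∫ ω, 1 / (p₁ + (1 - p₁) * (c * (fAc ω / fA ω))) ∂P₁) ∧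
    (∀ c : ℝ, 0 < c →
      (1:ℝ) = ∫ ω, 1 / (p₁ + (1 - p₁) * (c * (fAc ω / fA ω))) ∂P₁ →
      (∫⁻ ω, ENNReal.ofReal (fAc ω / fA ω) ∂P₁)⁻¹ < ENNReal.ofReal c ∧
        ENNReal.ofReal c < ∫⁻ ω, ENNReal.ofReal (fA ω / fAc ω) ∂P₁) := by
  obtain ⟨hp0, hp1⟩ := hp₁
  have hP₁μ : P₁ ≪ μ :=
    habs.trans (trim_absolutelyContinuous_of_setIntegral_eq hℋ hA hdensA hdensAc)
  have hLpos : ∀ᵐ ω ∂P₁, 0 < fAc ω / fA ω := by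
    filter_upwards [hP₁μ.ae_le hfA_pos, hP₁μ.ae_le hfAc_pos] with ω h h' using div_pos h' h
  have hL0 : 0 ≤ᵐ[P₁] fun ω ↦ fAc ω / fA ω := hLpos.mono fun _ ↦ le_of_lt
  have hLm : Measurable fun ω ↦ fAc ω / fA ω := hfAc_meas.div hfA_meas
  have hLc (a : ℝ) : ¬ (fun ω ↦ fAc ω / fA ω) =ᵐ[P₁] const Ω a :=
    not_ae_eq_const_of_measure_lt_one (hnonconst a)
  refine ⟨existsUnique_invMixtureMean_eq_one hLm.aemeasurable hLpos hp0 hp1,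
    fun c hc h1 ↦ ⟨?_, ?_⟩⟩
  · rw [ENNReal.inv_lt_iff_inv_lt, ← ENNReal.ofReal_inv_of_pos hc]
    exact ofReal_lt_lintegral_ofReal hLm.aestronglyMeasurable hL0 (inv_pos.mpr hc)
      fun hLi ↦ inv_lt_integral_of_invMixtureMean_eq_one hLpos hLi hLc hp0 hp1 hc h1.symm
  · simp_rw [← inv_div (fAc _)]
    exact ofReal_lt_lintegral_ofReal hLm.inv.aestronglyMeasurable
      (hL0.mono fun _ h ↦ inv_nonneg.mpr h) hc
      fun hLi ↦ lt_integral_inv_of_invMixtureMean_eq_one hLm.aemeasurable hLpos hLi hLc hp0 hp1 hc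
        h1.symm

/-- **scaled likelihood ratio.** Suppose `λ₀` is non-constant under `P₁`
(i.e. `P₁[λ₀ = c′] < 1` for every constant `c′`) and fix `p₁ ∈ (0,1)`. Then there is a
unique `c > 0` solving `1 = E₁[1/(p₁ + (1−p₁)·c·λ₀)]`, and every such solution satisfies
`1/E₁[λ₀] < c < E₁[1/λ₀]` (bounds interpreted in `[0,∞]`). -/
theorem scaled_likelihood_ratio
    {Ω : Type*} {𝒜 ℋ : MeasurableSpace Ω} (hℋ : ℋ ≤ 𝒜)
    (P₀ : @Measure Ω 𝒜) [IsProbabilityMeasure P₀]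
    (P₁ : @Measure Ω ℋ) [IsProbabilityMeasure P₁] (habs : P₁ ≪ P₀.trim hℋ)
    (A : Set Ω) (hA : MeasurableSet[𝒜] A)
    (p₀ : ℝ) (hp₀ : p₀ = (P₀ A).toReal) (hp₀0 : 0 < p₀) (hp₀1 : p₀ < 1)
    (μ : @Measure Ω ℋ) [SigmaFinite μ]
    (fA fAc : Ω → ℝ)
    (hfA_meas : @Measurable Ω ℝ ℋ _ fA) (hfAc_meas : @Measurable Ω ℝ ℋ _ fAc)
    (hfA_int : Integrable fA μ) (hfAc_int : Integrable fAc μ)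
    (hfA_pos : ∀ᵐ ω ∂μ, 0 < fA ω) (hfAc_pos : ∀ᵐ ω ∂μ, 0 < fAc ω)
    (hdensA : ∀ H : Set Ω, MeasurableSet[ℋ] H →
      (P₀ (H ∩ A)).toReal = p₀ * ∫ ω in H, fA ω ∂μ)
    (hdensAc : ∀ H : Set Ω, MeasurableSet[ℋ] H →
      (P₀ (H ∩ Aᶜ)).toReal = (1 - p₀) * ∫ ω in H, fAc ω ∂μ)
    (hnonconst : ∀ c' : ℝ, P₁ {ω | fAc ω / fA ω = c'} < 1)
    (p₁ : ℝ) (hp₁ : p₁ ∈ Set.Ioo (0:ℝ) 1) :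
    (∃! c : ℝ, 0 < c ∧
      (1:ℝ) = ∫ ω, 1 / (p₁ + (1 - p₁) * (c * (fAc ω / fA ω))) ∂P₁) ∧
    (∀ c : ℝ, 0 < c →
      (1:ℝ) = ∫ ω, 1 / (p₁ + (1 - p₁) * (c * (fAc ω / fA ω))) ∂P₁ →
      (∫⁻ ω, ENNReal.ofReal (fAc ω / fA ω) ∂P₁)⁻¹ < ENNReal.ofReal c ∧
        ENNReal.ofReal c < ∫⁻ ω, ENNReal.ofReal (fA ω / fAc ω) ∂P₁) :=
  scaled_likelihood_ratio_general hℋ P₀ P₁ habs A hA p₀ μ fA fAc hfA_meas hfAc_meas hfA_pos hfAc_pos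
    hdensA hdensAc hnonconst p₁ hp₁
end
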